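/- The category of polynomial functors is closed under all small limits: the pointwise limit of any small diagram of polynomial functors (as functors Set → Set) is again a polynomial functor. -/

import Mathlib

/-!
By Yoneda, a natural transformation `P ⟶ Q` of polynomial functors is determined by the images
of the generic elements `⟨a, id⟩ : P (P.B a)`: it maps shapes forwards and positions backwards.
So a diagram of polynomial functors is a diagram of shapes together with a contravariant diagram
of positions, and its pointwise limit is polynomial again: its shapes are the compatible families
of shapes, and the positions over such a family are the colimit of the positions.
-/

universe u

open CategoryTheory CategoryTheory.Limits

/-- The endofunctor of `Type u` underlying a polynomial functor. -/
def PFunctor.toFunctor (P : PFunctor.{u}) : Type u ⥤ Type u where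
  obj := P.Obj
  map f := TypeCat.ofHom (P.map f)
  map_id := by intro X; apply ConcreteCategory.hom_ext; intro x; cases x; rfl
  map_comp := by intro X Y Z f g; apply ConcreteCategory.hom_ext; intro x; cases x; rfl

namespace PFunctor

section NatTrans

variable {P Q : PFunctor.{u}} {X : Type u}

theorem obj_mk_eq_mk {a a' : P.A} (h : a = a') {f : P.B a → X} {f' : P.B a' → X}
    (hf : ∀ b, f (cast (congrArg P.B h.symm) b) = f' b) : (⟨a, f⟩ : P.Obj X) = ⟨a', f'⟩ := by
  subst h
  exact congrArg _ (funext hf)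

theorem Obj.snd_eq_of_eq {x y : P.Obj X} (h : x = y) (b : P.B y.1) :
    y.2 b = x.2 (cast (congrArg P.B (congrArg Sigma.fst h).symm) b) := by
  subst h
  rfl

def natTransShape (α : P.toFunctor ⟶ Q.toFunctor) (a : P.A) : Q.A :=
  (α.app (P.B a) ⟨a, id⟩).1

def natTransPos (α : P.toFunctor ⟶ Q.toFunctor) (a : P.A) :
    Q.B (natTransShape α a) → P.B a :=
  (α.app (P.B a) ⟨a, id⟩).2

theorem natTrans_app_mk (α : P.toFunctor ⟶ Q.toFunctor) (a : P.A) (f : P.B a → X) :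
    α.app X ⟨a, f⟩ = ⟨natTransShape α a, f ∘ natTransPos α a⟩ :=
  α.naturality_apply (TypeCat.ofHom f) ⟨a, id⟩

end NatTrans

section Limit

variable {J : Type u} [SmallCategory J] (F : J ⥤ Type u ⥤ Type u) (P : J → PFunctor.{u})
  (e : ∀ j, F.obj j ≅ (P j).toFunctor)

def transition {j k : J} (u : j ⟶ k) : (P j).toFunctor ⟶ (P k).toFunctor :=
  (e j).inv ≫ F.map u ≫ (e k).hom

def LimitShape : Type u :=
  {a : ∀ j, (P j).A // ∀ ⦃j k : J⦄ (u : j ⟶ k), natTransShape (transition F P e u) (a j) = a k}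

variable {F P e} in
def LimitShape.posMap (a : LimitShape F P e) {j k : J} (u : j ⟶ k) (b : (P k).B (a.1 k)) :
    (P j).B (a.1 j) :=
  natTransPos (transition F P e u) (a.1 j) (cast (congrArg (P k).B (a.2 u).symm) b)

def LimitPos (a : LimitShape F P e) : Type u :=
  Quot fun x y : Σ j, (P j).B (a.1 j) => ∃ u : x.1 ⟶ y.1, x.2 = a.posMap u y.2

def limit : PFunctor.{u} := ⟨LimitShape F P e, LimitPos F P e⟩

def limitProj (j : J) : (limit F P e).toFunctor ⟶ (P j).toFunctor where
  app X := TypeCat.ofHom fun x => ⟨x.1.1 j, fun b => x.2 (Quot.mk _ ⟨j, b⟩)⟩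

theorem limitProj_comp_transition {j k : J} (u : j ⟶ k) :
    limitProj F P e j ≫ transition F P e u = limitProj F P e k := by
  ext X ⟨a, f⟩
  refine (natTrans_app_mk (transition F P e u) _ _).trans (obj_mk_eq_mk (a.2 u) fun b => ?_)
  exact congrArg f (Quot.sound ⟨u, rfl⟩)

def limitCone : Cone F where
  pt := (limit F P e).toFunctor
  π :=
    { app := fun j => limitProj F P e j ≫ (e j).inv
      naturality := fun j k u => by
        simp [← limitProj_comp_transition F P e u, transition] }

theorem exists_limitProj_app_eq (X : Type u) (s : ∀ j, (P j).Obj X)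
    (hs : ∀ ⦃j k : J⦄ (u : j ⟶ k), (transition F P e u).app X (s j) = s k) :
    ∃ x, ∀ j, (limitProj F P e j).app X x = s j := by
  have hshape : ∀ ⦃j k : J⦄ (u : j ⟶ k),
      (⟨natTransShape (transition F P e u) (s j).1, (s j).2 ∘ natTransPos _ _⟩ : (P k).Obj X)
        = s k := fun j k u => (natTrans_app_mk _ _ _).symm.trans (hs u)
  let a : LimitShape F P e := ⟨fun j => (s j).1, fun j k u => congrArg Sigma.fst (hshape u)⟩
  let f : LimitPos F P e a → X := Quot.lift (fun x => (s x.1).2 x.2) <| by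
    rintro ⟨j, b⟩ ⟨k, b'⟩ ⟨u, hb : b = a.posMap u b'⟩
    rw [hb]
    exact (Obj.snd_eq_of_eq (hshape u) b').symm
  exact ⟨⟨a, f⟩, fun j => rfl⟩

theorem limitProj_app_injective (X : Type u) {x y : (limit F P e).Obj X}
    (h : ∀ j, (limitProj F P e j).app X x = (limitProj F P e j).app X y) : x = y := by
  obtain ⟨a, f⟩ := x
  obtain ⟨a', f'⟩ := y
  obtain rfl : a = a' := Subtype.ext (funext fun j => congrArg Sigma.fst (h j))
  congr
  funext b
  induction b using Quot.ind with
  | mk x => exact congrFun (eq_of_heq (Sigma.mk.inj_iff.mp (h x.1)).2) x.2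

noncomputable def limitConeIsLimit : IsLimit (limitCone F P e) :=
  evaluationJointlyReflectsLimits _ fun X => Nonempty.some <| (Types.isLimit_iff _).mpr
    fun s hs => by
      have hcompat : ∀ ⦃j k : J⦄ (u : j ⟶ k),
          (transition F P e u).app X ((e j).hom.app X (s j)) = (e k).hom.app X (s k) :=
        fun j k u => by simp [transition, ← hs u]
      obtain ⟨x, hx⟩ := exists_limitProj_app_eq F P e X _ hcompat
      refine ⟨x, fun j => ?_, fun y hy => limitProj_app_injective F P e X fun j => ?_⟩
      · show (e j).inv.app X ((limitProj F P e j).app X x) = s j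
        rw [hx]
        exact (e j).hom_inv_id_app_apply X (s j)
      · rw [hx, ← hy j]
        exact ((e j).inv_hom_id_app_apply X _).symm

end Limit

end PFunctor

/-- polynomial functors are closed under all small limits: the limit
(in the functor category, hence pointwise) of any small diagram of polynomial
functors is again a polynomial functor. -/
theorem pfunctor_closed_under_limits (J : Type u) [SmallCategory J]
    (D : J ⥤ Type u ⥤ Type u)
    (hD : ∀ j : J, ∃ P : PFunctor.{u}, Nonempty (D.obj j ≅ P.toFunctor))
    (c : Cone D) (hc : IsLimit c) :
    ∃ P : PFunctor.{u}, Nonempty (c.pt ≅ P.toFunctor) := by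
  choose P hP using hD
  let e j : D.obj j ≅ (P j).toFunctor := (hP j).some
  exact ⟨PFunctor.limit D P e, ⟨hc.conePointUniqueUpToIso (PFunctor.limitConeIsLimit D P e)⟩⟩
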